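/- Suppose f : Γ → ℝ satisfies: f is symmetric, homogeneous of degree one, f > 0 on Γ, fᵢ > 0 on Γ, and f is concave on Γ, where Γ is an open convex symmetric cone with Γₙ ⊆ Γ ⊆ Γ₁. Then there is a constant c₀ > 0 such that Σᵢ fᵢ(λ) ≥ c₀ for all λ ∈ Γ. One can take c₀ = f(e)/n where e = (1, ..., 1). -/

import Mathlib

/-!
Concavity gives the tangent-plane inequality `f μ ≤ f λ + Df(λ)(μ - λ)`, and Euler's identity
`Df(λ) λ = f λ` for degree-one homogeneous `f` cancels the `f λ` terms, leaving `f μ ≤ Df(λ) μ`.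
At `μ = e` the right-hand side is `Σᵢ fᵢ(λ)`, so `Σᵢ fᵢ(λ) ≥ f(e) ≥ f(e)/n`.
-/

variable {E F : Type*} [NormedAddCommGroup E] [NormedSpace ℝ E]
  [NormedAddCommGroup F] [NormedSpace ℝ F]

theorem fderiv_apply_self_of_smul_homogeneous {f : E → F} {x : E}
    (hhom : ∀ t : ℝ, 0 < t → f (t • x) = t • f x) (hf : DifferentiableAt ℝ f x) :
    fderiv ℝ f x x = f x := by
  have hray : HasDerivAt (fun t : ℝ => f (t • x)) (fderiv ℝ f x x) 1 := by
    have hsmul : HasDerivAt (fun t : ℝ => t • x) x 1 := by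
      simpa using (hasDerivAt_id (1 : ℝ)).smul_const x
    exact (by simpa using hf.hasFDerivAt : HasFDerivAt f (fderiv ℝ f x) ((1 : ℝ) • x))
      |>.comp_hasDerivAt 1 hsmul
  have hlin : HasDerivAt (fun t : ℝ => f (t • x)) (f x) 1 := by
    have hid : HasDerivAt (fun t : ℝ => t • f x) (f x) 1 := by
      simpa using (hasDerivAt_id (1 : ℝ)).smul_const (f x)
    exact hid.congr_of_eventuallyEq <| (lt_mem_nhds one_pos).mono fun t ht => hhom t ht
  exact hray.unique hlin

theorem ConcaveOn.le_add_fderiv {s : Set E} {f : E → ℝ} {x y : E} (hf : ConcaveOn ℝ s f)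
    (hx : x ∈ s) (hy : y ∈ s) (hd : DifferentiableAt ℝ f x) :
    f y ≤ f x + fderiv ℝ f x (y - x) := by
  set γ : ℝ →ᵃ[ℝ] E := AffineMap.lineMap x y
  have hconc : ConcaveOn ℝ (γ ⁻¹' s) (f ∘ γ) := hf.comp_affineMap γ
  have hderiv : HasDerivAt (f ∘ γ) (fderiv ℝ f x (y - x)) 0 :=
    (by simpa [γ] using hd.hasFDerivAt : HasFDerivAt f (fderiv ℝ f x) (γ 0)).comp_hasDerivAt 0
      AffineMap.hasDerivAt_lineMap
  have hslope := hconc.slope_le_of_hasDerivAt (x := 0) (y := 1)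
    (by simpa [γ] using hx) (by simpa [γ] using hy) one_pos hderiv
  simp only [slope_def_field, Function.comp_apply, γ, AffineMap.lineMap_apply_zero,
    AffineMap.lineMap_apply_one, sub_zero, div_one] at hslope
  linarith

theorem ConcaveOn.le_fderiv_apply_of_homogeneous {s : Set E} {f : E → ℝ} {x y : E}
    (hf : ConcaveOn ℝ s f) (hhom : ∀ t : ℝ, 0 < t → f (t • x) = t * f x)
    (hx : x ∈ s) (hy : y ∈ s) (hd : DifferentiableAt ℝ f x) :
    f y ≤ fderiv ℝ f x y := by
  have heuler := fderiv_apply_self_of_smul_homogeneous hhom hd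
  have htangent := hf.le_add_fderiv hx hy hd
  rw [map_sub, heuler] at htangent
  linarith

theorem EuclideanSpace.sum_single_eq_toLp {ι : Type*} [Fintype ι] [DecidableEq ι] (c : ι → ℝ) :
    ∑ i, EuclideanSpace.single i (c i) = WithLp.toLp 2 c := by
  ext j
  simp

theorem sum_fi_lower_bound_general (n : ℕ) (hn : 0 < n) (Γ : Set (EuclideanSpace ℝ (Fin n)))
    (f : EuclideanSpace ℝ (Fin n) → ℝ)
    (hopen : IsOpen Γ)
    (hGn : {lam : EuclideanSpace ℝ (Fin n) | ∀ i, 0 < lam i} ⊆ Γ)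
    (hC1 : ContDiffOn ℝ 1 f Γ)
    (hpos : ∀ lam ∈ Γ, 0 < f lam)
    (hhom : ∀ lam ∈ Γ, ∀ t : ℝ, 0 < t → f (t • lam) = t * f lam)
    (hconc : ConcaveOn ℝ Γ f) :
    0 < f (WithLp.toLp 2 (fun _ => (1 : ℝ))) / n ∧
    ∀ lam ∈ Γ, f (WithLp.toLp 2 (fun _ => (1 : ℝ))) / n ≤
      ∑ i, fderiv ℝ f lam (EuclideanSpace.single i 1) := by
  set e : EuclideanSpace ℝ (Fin n) := WithLp.toLp 2 fun _ => 1
  have he : e ∈ Γ := hGn fun _ => one_pos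
  have hfe : 0 < f e := hpos e he
  refine ⟨by positivity, fun lam hlam => ?_⟩
  have hd : DifferentiableAt ℝ f lam :=
    (hC1.differentiableOn one_ne_zero).differentiableAt (hopen.mem_nhds hlam)
  calc f e / n ≤ f e := div_le_self hfe.le (by exact_mod_cast hn)
    _ ≤ fderiv ℝ f lam e := hconc.le_fderiv_apply_of_homogeneous (hhom lam hlam) hlam he hd
    _ = ∑ i, fderiv ℝ f lam (EuclideanSpace.single i 1) := by
      rw [← map_sum, EuclideanSpace.sum_single_eq_toLp]

/-- For f symmetric, degree-one homogeneous, positive, with positive partial derivatives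
and concave on an open convex symmetric cone Γₙ ⊆ Γ ⊆ Γ₁, one has Σᵢ fᵢ(λ) ≥ c₀ > 0
for all λ ∈ Γ, with c₀ = f(e)/n, e = (1,…,1). -/
theorem sum_fi_lower_bound (n : ℕ) (hn : 0 < n) (Γ : Set (EuclideanSpace ℝ (Fin n)))
    (f : EuclideanSpace ℝ (Fin n) → ℝ)
    (hopen : IsOpen Γ) (hconv : Convex ℝ Γ)
    (hcone : ∀ lam ∈ Γ, ∀ t : ℝ, 0 < t → t • lam ∈ Γ)
    (hperm : ∀ (σ : Equiv.Perm (Fin n)), ∀ lam ∈ Γ,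
      (WithLp.toLp 2 (fun i => lam (σ i))) ∈ Γ ∧ f (WithLp.toLp 2 (fun i => lam (σ i))) = f lam)
    (hGn : {lam : EuclideanSpace ℝ (Fin n) | ∀ i, 0 < lam i} ⊆ Γ)
    (hG1 : Γ ⊆ {lam : EuclideanSpace ℝ (Fin n) | 0 < ∑ i, lam i})
    (hC1 : ContDiffOn ℝ 1 f Γ)
    (hpos : ∀ lam ∈ Γ, 0 < f lam)
    (hhom : ∀ lam ∈ Γ, ∀ t : ℝ, 0 < t → f (t • lam) = t * f lam)
    (hderiv_pos : ∀ lam ∈ Γ, ∀ i, 0 < fderiv ℝ f lam (EuclideanSpace.single i 1))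
    (hconc : ConcaveOn ℝ Γ f) :
    0 < f (WithLp.toLp 2 (fun _ => (1 : ℝ))) / n ∧
    ∀ lam ∈ Γ, f (WithLp.toLp 2 (fun _ => (1 : ℝ))) / n ≤
      ∑ i, fderiv ℝ f lam (EuclideanSpace.single i 1) :=
  sum_fi_lower_bound_general n hn Γ f hopen hGn hC1 hpos hhom hconc
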